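/- arXiv:1504.02168 — 6 statements merged into one kernel-verified Lean document; each statement's English description precedes it below -/
import Mathlib

section
/- In an ICC digraph with k ≥ 2 Type-I paths, every directed cycle contains at least two terminal vertices of Type-I paths, i.e., at least two vertices from the set {v_{n_i}^i : i = 1,…,k}. -/
/-- An ICC digraph with `k` Type-I paths. `n1 i ≥ 1` is the number of vertices of
Type-I path `P_i`; `n2 i j` is the number of vertices of Type-II path `P_{i,j}`
(`0` if empty, and `n2 i i = 0`); `q i j` (1-based, `1 ≤ q i j ≤ n1 j`) is the
index of the vertex of `P_j` that the arc leaving `P_{i,j}` (or, if `P_{i,j}` is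
empty, the arc leaving the terminal vertex of `P_i`) points to. -/
structure ICCDigraph (k : ℕ) where
  n1 : Fin k → ℕ
  hn1 : ∀ i, 1 ≤ n1 i
  n2 : Fin k → Fin k → ℕ
  hdiag : ∀ i, n2 i i = 0
  q : Fin k → Fin k → ℕ
  hq1 : ∀ i j, 1 ≤ q i j
  hq2 : ∀ i j, q i j ≤ n1 j

namespace ICCDigraph

variable {k : ℕ} (D : ICCDigraph k)

/-- The vertex set: vertices `v_{a+1}^i = ⟨i, a⟩` of Type-I paths (0-based `a`),
and vertices `v_{b+1}^{ij} = ⟨(i,j), b⟩` of Type-II paths. -/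
abbrev Vtx : Type :=
  (Σ i : Fin k, Fin (D.n1 i)) ⊕ (Σ p : Fin k × Fin k, Fin (D.n2 p.1 p.2))

/-- The terminal vertex `v_{n_i}^i` of Type-I path `P_i`. -/
def terminal (i : Fin k) : D.Vtx :=
  Sum.inl ⟨i, ⟨D.n1 i - 1, by have := D.hn1 i; omega⟩⟩

/-- The arc relation of the ICC digraph: arcs along Type-I and Type-II paths,
and the interconnecting arcs. -/
def Arc : D.Vtx → D.Vtx → Prop
  | Sum.inl ⟨i, a⟩, Sum.inl ⟨j, a'⟩ =>
      (i = j ∧ (a' : ℕ) = (a : ℕ) + 1) ∨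
      (i ≠ j ∧ (a : ℕ) = D.n1 i - 1 ∧ D.n2 i j = 0 ∧ (a' : ℕ) = D.q i j - 1)
  | Sum.inl ⟨i, a⟩, Sum.inr ⟨p, b⟩ =>
      i = p.1 ∧ (a : ℕ) = D.n1 i - 1 ∧ (b : ℕ) = 0
  | Sum.inr ⟨p, b⟩, Sum.inr ⟨p', b'⟩ =>
      p = p' ∧ (b' : ℕ) = (b : ℕ) + 1
  | Sum.inr ⟨p, b⟩, Sum.inl ⟨j, a⟩ =>
      p.2 = j ∧ (b : ℕ) = D.n2 p.1 p.2 - 1 ∧ (a : ℕ) = D.q p.1 p.2 - 1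

/-- A closed directed walk (cycle) starting and ending at `v`, visiting the
vertices `v :: l`. -/
def IsClosedWalk (v : D.Vtx) (l : List D.Vtx) : Prop :=
  List.Chain D.Arc v (l ++ [v])

/-- `S` induces an acyclic subdigraph: no directed cycle lies within `S`. -/
def AcyclicOn (S : Finset D.Vtx) : Prop :=
  ¬ ∃ (v : D.Vtx) (l : List D.Vtx), v ∈ S ∧ (∀ u ∈ l, u ∈ S) ∧ D.IsClosedWalk v l

open Classical in
/-- `MAIS(D)`: the maximum order of an acyclic induced subdigraph. -/
noncomputable def mais : ℕ :=
  (Finset.univ.filter fun S : Finset D.Vtx => D.AcyclicOn S).sup Finset.card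

/-- The message (1-based index `a`) of the `a`-th vertex of Type-I path `P_i`
(`0` if out of range). -/
def msgI {t : ℕ} (x : D.Vtx → Fin t → ZMod 2) (i : Fin k) (a : ℕ) :
    Fin t → ZMod 2 :=
  if h : 1 ≤ a ∧ a ≤ D.n1 i then x (Sum.inl ⟨i, ⟨a - 1, by omega⟩⟩) else 0

/-- The message (1-based index `b`) of the `b`-th vertex of Type-II path
`P_{i,j}` (`0` if out of range). -/
def msgII {t : ℕ} (x : D.Vtx → Fin t → ZMod 2) (i j : Fin k) (b : ℕ) :
    Fin t → ZMod 2 :=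
  if h : 1 ≤ b ∧ b ≤ D.n2 i j then x (Sum.inr ⟨(i, j), ⟨b - 1, by show b - 1 < D.n2 i j; omega⟩⟩) else 0

/-- Index set of the ICC code's codewords: the `n_i - 1` codewords along each
Type-I path, the `n_{ij} - 1` codewords along each Type-II path, one codeword per
nonempty Type-II path, and the single codeword `⊕ᵢ x_{n_i}^i`. -/
abbrev CodeIdx : Type :=
  (Σ i : Fin k, Fin (D.n1 i - 1)) ⊕
    ((Σ p : Fin k × Fin k, Fin (D.n2 p.1 p.2 - 1)) ⊕
      (({p : Fin k × Fin k // 1 ≤ D.n2 p.1 p.2}) ⊕ Unit))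

/-- The ICC code: `w_a^i = x_a^i ⊕ x_{a+1}^i`, `w_b^{ij} = x_b^{ij} ⊕ x_{b+1}^{ij}`,
`w_{n_{ij}}^{ij} = x_{n_{ij}}^{ij} ⊕ x_{q_i}^j`, and `w' = ⊕ᵢ x_{n_i}^i`. -/
def code {t : ℕ} (x : D.Vtx → Fin t → ZMod 2) : D.CodeIdx → Fin t → ZMod 2
  | Sum.inl ⟨i, a⟩ => D.msgI x i ((a : ℕ) + 1) + D.msgI x i ((a : ℕ) + 2)
  | Sum.inr (Sum.inl ⟨p, b⟩) =>
      D.msgII x p.1 p.2 ((b : ℕ) + 1) + D.msgII x p.1 p.2 ((b : ℕ) + 2)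
  | Sum.inr (Sum.inr (Sum.inl ⟨p, _⟩)) =>
      D.msgII x p.1 p.2 (D.n2 p.1 p.2) + D.msgI x p.2 (D.q p.1 p.2)
  | Sum.inr (Sum.inr (Sum.inr _)) => ∑ i : Fin k, D.msgI x i (D.n1 i)

end ICCDigraph

/-!
Every arc leaving a non-terminal vertex stays on the way to one fixed terminal vertex
`v_{n_j}^j` and strictly shortens the distance to it, so a closed walk through any vertex
must pass through the terminal vertex it leads to. Every arc leaving `v_{n_i}^i` heads for
some `P_j` with `j ≠ i` (type-II paths `P_{i,i}` are empty), so the closed walk then also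
passes through `v_{n_j}^j`.
-/

theorem List.Forall₂.exists_mem_rel {α β : Type*} {R : α → β → Prop} {l₁ : List α} {l₂ : List β}
    (h : List.Forall₂ R l₁ l₂) {a : α} (ha : a ∈ l₁) : ∃ b ∈ l₂, R a b := by
  induction h with
  | nil => simp at ha
  | @cons _ b _ _ hab _ ih =>
    rcases List.mem_cons.1 ha with rfl | ha
    · exact ⟨b, List.mem_cons_self, hab⟩
    · obtain ⟨b', hb', hab'⟩ := ih ha
      exact ⟨b', List.mem_cons_of_mem _ hb', hab'⟩

namespace ICCDigraph

variable {k : ℕ} (D : ICCDigraph k)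

/-- The Type-I path that the walk leaving a vertex runs into first: `P_i` for `v_a^i`, and
`P_j` for a vertex of `P_{i,j}`. -/
def destPath : D.Vtx → Fin k
  | Sum.inl ⟨i, _⟩ => i
  | Sum.inr ⟨p, _⟩ => p.2

/-- The length of the unique walk from `u` to `terminal (destPath u)`. -/
def distToTerminal : D.Vtx → ℕ
  | Sum.inl ⟨i, a⟩ => D.n1 i - 1 - a
  | Sum.inr ⟨p, b⟩ => (D.n2 p.1 p.2 - 1 - b) + 1 + (D.n1 p.2 - D.q p.1 p.2)

variable {D}

theorem inl_eq_terminal {i : Fin k} {a : Fin (D.n1 i)} (h : (a : ℕ) = D.n1 i - 1) :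
    (Sum.inl ⟨i, a⟩ : D.Vtx) = D.terminal i := by
  rw [terminal, Sum.inl.injEq, Sigma.mk.injEq]
  exact ⟨rfl, heq_of_eq (Fin.ext h)⟩

theorem Arc.destPath_eq_and_distToTerminal_lt {u u' : D.Vtx} (h : D.Arc u u')
    (hu : u ≠ D.terminal (D.destPath u)) :
    D.destPath u' = D.destPath u ∧ D.distToTerminal u' < D.distToTerminal u := by
  obtain (⟨i, a⟩ | ⟨p, b⟩) := u <;> obtain (⟨j, a'⟩ | ⟨p', b'⟩) := u'
  · rcases h with ⟨rfl, ha'⟩ | ⟨_, ha, _⟩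
    · have ha : (a : ℕ) ≠ D.n1 i - 1 := fun ha => hu (inl_eq_terminal ha)
      exact ⟨rfl, by simp only [distToTerminal]; omega⟩
    · exact absurd (inl_eq_terminal ha) hu
  · exact absurd (inl_eq_terminal h.2.1) hu
  · obtain ⟨rfl, hb, ha'⟩ := h
    have := D.hq1 p.1 p.2
    exact ⟨rfl, by simp only [distToTerminal]; omega⟩
  · obtain ⟨rfl, hb'⟩ := h
    exact ⟨rfl, by simp only [distToTerminal]; omega⟩

theorem Arc.destPath_ne_of_terminal {i : Fin k} {u : D.Vtx} (h : D.Arc (D.terminal i) u) :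
    D.destPath u ≠ i := by
  obtain (⟨j, a⟩ | ⟨p, b⟩) := u
  · rcases h with ⟨rfl, ha⟩ | ⟨hij, -⟩
    · have := a.isLt
      have := D.hn1 i
      simp only at ha
      omega
    · exact hij.symm
  · obtain ⟨hi, -⟩ := h
    intro hp
    have hempty : D.n2 p.1 p.2 = 0 := by
      rw [show p.2 = p.1 from hp.trans hi]
      exact D.hdiag p.1
    exact absurd b.isLt (by omega)

theorem terminal_destPath_mem {S : Set D.Vtx} (hS : ∀ u ∈ S, ∃ u' ∈ S, D.Arc u u') {u : D.Vtx}
    (hu : u ∈ S) : D.terminal (D.destPath u) ∈ S := by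
  by_cases hterm : u = D.terminal (D.destPath u)
  · exact hterm ▸ hu
  obtain ⟨u', hu', harc⟩ := hS u hu
  obtain ⟨hdest, -⟩ := harc.destPath_eq_and_distToTerminal_lt hterm
  exact hdest ▸ terminal_destPath_mem hS hu'
termination_by D.distToTerminal u
decreasing_by exact (harc.destPath_eq_and_distToTerminal_lt hterm).2

theorem IsClosedWalk.exists_arc_mem {v : D.Vtx} {l : List D.Vtx} (hc : D.IsClosedWalk v l)
    {u : D.Vtx} (hu : u ∈ v :: l) : ∃ u' ∈ v :: l, D.Arc u u' := by
  obtain ⟨u', hu', harc⟩ :=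
    (List.isChain_cons_append_singleton_iff_forall₂.1 hc).exists_mem_rel hu
  refine ⟨u', ?_, harc⟩
  simp only [List.mem_append, List.mem_singleton] at hu'
  rcases hu' with hu' | rfl
  · exact List.mem_cons_of_mem _ hu'
  · exact List.mem_cons_self

end ICCDigraph

theorem stmt3_general {k : ℕ} (D : ICCDigraph k)
    (v : D.Vtx) (l : List D.Vtx) (hc : D.IsClosedWalk v l) :
    ∃ i j : Fin k, i ≠ j ∧ D.terminal i ∈ v :: l ∧ D.terminal j ∈ v :: l := by
  have hS : ∀ u ∈ v :: l, ∃ u' ∈ v :: l, D.Arc u u' := fun _ => hc.exists_arc_mem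
  have hv := D.terminal_destPath_mem hS List.mem_cons_self
  obtain ⟨u, hu, harc⟩ := hS _ hv
  exact ⟨D.destPath v, D.destPath u, harc.destPath_ne_of_terminal.symm, hv,
    D.terminal_destPath_mem hS hu⟩

/-- In an ICC digraph with `k ≥ 2` Type-I paths, every directed
cycle contains at least two (distinct) terminal vertices of Type-I paths. -/
theorem stmt3 {k : ℕ} (hk : 2 ≤ k) (D : ICCDigraph k)
    (v : D.Vtx) (l : List D.Vtx) (hc : D.IsClosedWalk v l) :
    ∃ i j : Fin k, i ≠ j ∧ D.terminal i ∈ v :: l ∧ D.terminal j ∈ v :: l :=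
  stmt3_general D v l hc
end

section
/- For an ICC digraph D with k ≥ 2 Type-I paths, the removal of any set of at most k−2 vertices leaves at least one directed cycle; consequently MAIS(D) ≤ n − (k−1), where n is the number of vertices. -/
/-! Send each vertex of `P_j` or of `P_{i,j}` to the index `j`. For `i ≠ j`, the vertices sent
to `i` or `j` carry a cycle through both terminals:
`v_{n_i}^i → P_{i,j} → P_j → v_{n_j}^j → P_{j,i} → P_i → v_{n_i}^i`.
A set of at most `k - 2` vertices meets the preimages of at most `k - 2` indices, so two indices
remain and their cycle survives. Hence every acyclic induced subdigraph misses at least `k - 1`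
vertices. -/

theorem Relation.TransGen.exists_isChain_append_of_restrict {α : Type*} {r : α → α → Prop}
    {p : α → Prop} {a b : α} (h : Relation.TransGen (fun x y => r x y ∧ p y) a b) :
    ∃ l : List α, (∀ u ∈ l, p u) ∧ List.IsChain r (a :: (l ++ [b])) := by
  induction h using Relation.TransGen.head_induction_on with
  | single hab => exact ⟨[], by simp, List.IsChain.cons_cons hab.1 (.singleton b)⟩
  | head hac _ ih =>
    obtain ⟨l, hl, hchain⟩ := ih
    exact ⟨_ :: l, List.forall_mem_cons.2 ⟨hac.2, hl⟩, hchain.cons_cons hac.1⟩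

namespace ICCDigraph

variable {k : ℕ} (D : ICCDigraph k)

def terminalIndex : D.Vtx → Fin k
  | Sum.inl s => s.1
  | Sum.inr s => s.1.2

def ArcInto (j : Fin k) (u w : D.Vtx) : Prop :=
  D.Arc u w ∧ D.terminalIndex w = j

lemma reflTransGen_typeI {j : Fin k} {a b : ℕ} (hab : a ≤ b) (hb : b < D.n1 j) :
    Relation.ReflTransGen (D.ArcInto j) (Sum.inl ⟨j, ⟨a, hab.trans_lt hb⟩⟩)
      (Sum.inl ⟨j, ⟨b, hb⟩⟩) := by
  induction b, hab using Nat.le_induction with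
  | base => exact .refl
  | succ b _ ih => exact (ih (by omega)).tail ⟨Or.inl ⟨rfl, rfl⟩, rfl⟩

lemma reflTransGen_typeII {i j : Fin k} {a b : ℕ} (hab : a ≤ b) (hb : b < D.n2 i j) :
    Relation.ReflTransGen (D.ArcInto j) (Sum.inr ⟨(i, j), ⟨a, hab.trans_lt hb⟩⟩)
      (Sum.inr ⟨(i, j), ⟨b, hb⟩⟩) := by
  induction b, hab using Nat.le_induction with
  | base => exact .refl
  | succ b _ ih => exact (ih (by omega)).tail ⟨⟨rfl, rfl⟩, rfl⟩

lemma transGen_terminal {i j : Fin k} (hij : i ≠ j) :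
    Relation.TransGen (D.ArcInto j) (D.terminal i) (D.terminal j) := by
  have hq : D.q i j - 1 < D.n1 j := by have := D.hq1 i j; have := D.hq2 i j; omega
  have to_terminal :=
    D.reflTransGen_typeI (a := D.q i j - 1) (by omega) (Nat.sub_lt (D.hn1 j) one_pos)
  suffices Relation.TransGen (D.ArcInto j) (D.terminal i) (Sum.inl ⟨j, ⟨_, hq⟩⟩) from
    this.trans_left to_terminal
  rcases Nat.eq_zero_or_pos (D.n2 i j) with h0 | hpos
  · exact .single ⟨Or.inr ⟨hij, rfl, h0, rfl⟩, rfl⟩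
  · have enter : D.ArcInto j (D.terminal i) (Sum.inr ⟨(i, j), ⟨0, hpos⟩⟩) :=
      ⟨⟨rfl, rfl, rfl⟩, rfl⟩
    have leave : D.ArcInto j (Sum.inr ⟨(i, j), ⟨D.n2 i j - 1, Nat.sub_lt hpos one_pos⟩⟩)
        (Sum.inl ⟨j, ⟨_, hq⟩⟩) := ⟨⟨rfl, rfl, rfl⟩, rfl⟩
    exact (Relation.TransGen.head' enter (D.reflTransGen_typeII (Nat.zero_le _) _)).tail leave

lemma exists_isClosedWalk_terminal {i j : Fin k} (hij : i ≠ j) :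
    ∃ l : List D.Vtx, (∀ u ∈ l, D.terminalIndex u = i ∨ D.terminalIndex u = j) ∧
      D.IsClosedWalk (D.terminal i) l := by
  have mono (m : Fin k) (hm : m = i ∨ m = j) :
      D.ArcInto m ≤ fun u w => D.Arc u w ∧ (D.terminalIndex w = i ∨ D.terminalIndex w = j) :=
    fun u w huw => ⟨huw.1, huw.2 ▸ hm⟩
  exact Relation.TransGen.exists_isChain_append_of_restrict <|
    (Relation.TransGen.mono (mono j (.inr rfl)) _ _ (D.transGen_terminal hij)).trans
      (Relation.TransGen.mono (mono i (.inl rfl)) _ _ (D.transGen_terminal hij.symm))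

lemma exists_isClosedWalk_avoiding (hk : 2 ≤ k) (R : Finset D.Vtx) (hR : R.card ≤ k - 2) :
    ∃ (v : D.Vtx) (l : List D.Vtx),
      v ∉ R ∧ (∀ u ∈ l, u ∉ R) ∧ D.IsClosedWalk v l := by
  classical
  have hfree : 1 < (R.image D.terminalIndex)ᶜ.card := by
    rw [Finset.card_compl, Fintype.card_fin]
    have := R.card_image_le (f := D.terminalIndex)
    omega
  obtain ⟨i, hi, j, hj, hij⟩ := Finset.one_lt_card.1 hfree
  have avoid (u : D.Vtx) (hu : D.terminalIndex u = i ∨ D.terminalIndex u = j) : u ∉ R :=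
    fun huR => by
      rcases hu with hu | hu
      · exact Finset.mem_compl.1 hi (hu ▸ Finset.mem_image_of_mem _ huR)
      · exact Finset.mem_compl.1 hj (hu ▸ Finset.mem_image_of_mem _ huR)
  obtain ⟨l, hl, hwalk⟩ := D.exists_isClosedWalk_terminal hij
  exact ⟨_, l, avoid _ (.inl rfl), fun u hu => avoid u (hl u hu), hwalk⟩

lemma mais_le_card_sub (m : ℕ)
    (h : ∀ R : Finset D.Vtx, R.card ≤ m →
      ∃ (v : D.Vtx) (l : List D.Vtx), v ∉ R ∧ (∀ u ∈ l, u ∉ R) ∧ D.IsClosedWalk v l) :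
    D.mais ≤ Fintype.card D.Vtx - (m + 1) := by
  classical
  refine Finset.sup_le fun S hS => ?_
  have hlarge : m < Sᶜ.card := by
    by_contra! hsmall
    obtain ⟨v, l, hv, hl, hwalk⟩ := h _ hsmall
    exact (Finset.mem_filter.1 hS).2
      ⟨v, l, Finset.notMem_compl.1 hv, fun u hu => Finset.notMem_compl.1 (hl u hu), hwalk⟩
  rw [Finset.card_compl] at hlarge
  omega

end ICCDigraph

/-- For an ICC digraph with `k ≥ 2` Type-I paths, removing any set
of at most `k - 2` vertices leaves a directed cycle; consequently
`MAIS(D) ≤ n - (k - 1)`. -/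
theorem stmt7 {k : ℕ} (hk : 2 ≤ k) (D : ICCDigraph k) :
    (∀ R : Finset D.Vtx, R.card ≤ k - 2 →
      ∃ (v : D.Vtx) (l : List D.Vtx),
        v ∉ R ∧ (∀ u ∈ l, u ∉ R) ∧ D.IsClosedWalk v l) ∧
    D.mais ≤ Fintype.card D.Vtx - (k - 1) := by
  have hcycle := D.exists_isClosedWalk_avoiding hk
  refine ⟨hcycle, ?_⟩
  have := D.mais_le_card_sub (k - 2) hcycle
  rwa [show k - 2 + 1 = k - 1 by omega] at this
end

section
/- For an ICC digraph D with k Type-I paths and n vertices, MAIS(D) = n − k + 1. -/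
/-!
Upper bound: call a vertex of `P_i` or of `P_{i,j}` *owned* by `i`. For `i ≠ j` the vertices owned
by `i` or `j` carry a directed cycle: from `v_{n_i}^i` through `P_{i,j}` into `P_j`, along `P_j` to
`v_{n_j}^j`, through `P_{j,i}` into `P_i` and back along `P_i`. So a set whose complement has at
most `k - 2` vertices misses two owners entirely and contains such a cycle.

Lower bound: deleting the terminal vertices of all Type-I paths but one, `P_{i₀}`, leaves an
acyclic digraph, since the arcs that remain respect the order
`P_{i,j} (i ≠ i₀) < P_{i₀} < P_{i₀,j} < P_j (j ≠ i₀)`, refined by the position along each path.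
-/

open Relation Finset

theorem Relation.transGen_restrict_iff {α : Type*} {r : α → α → Prop} {p : α → Prop} {a b : α} :
    TransGen (fun u v => p u ∧ p v ∧ r u v) a b ↔
      p a ∧ p b ∧ ∃ l : List α, (∀ u ∈ l, p u) ∧ List.IsChain r (a :: (l ++ [b])) := by
  constructor
  · intro h
    induction h using TransGen.head_induction_on with
    | single hab => exact ⟨hab.1, hab.2.1, [], by simp, by simpa using hab.2.2⟩
    | head hac _ ih =>
      obtain ⟨-, hb, l, hl, hchain⟩ := ih
      exact ⟨hac.1, hb, _ :: l, by simpa [hac.2.1] using hl, hchain.cons_cons hac.2.2⟩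
  · rintro ⟨ha, hb, l, hl, hchain⟩
    induction l generalizing a with
    | nil => exact .single ⟨ha, hb, by simpa using hchain⟩
    | cons c l ih =>
      rw [List.cons_append, List.isChain_cons_cons] at hchain
      have hc : p c := hl c (by simp)
      exact .head ⟨ha, hc, hchain.1⟩ (ih hc (fun u hu => hl u (by simp [hu])) hchain.2)

theorem Fin.reflTransGen_of_succ {α : Type*} {R : α → α → Prop} {n : ℕ} {f : Fin n → α}
    (hf : ∀ a b : Fin n, (b : ℕ) = a + 1 → R (f a) (f b)) {a b : Fin n} (hab : a ≤ b) :
    ReflTransGen R (f a) (f b) := by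
  obtain ⟨a, ha⟩ := a
  obtain ⟨b, hb⟩ := b
  induction b, Fin.mk_le_mk.1 hab using Nat.le_induction with
  | base => rfl
  | succ b hle ih => exact (ih (by omega) (Fin.mk_le_mk.2 hle)).tail (hf _ ⟨b + 1, hb⟩ rfl)

namespace ICCDigraph

variable {k : ℕ} (D : ICCDigraph k)

lemma terminal_injective : Function.Injective D.terminal :=
  fun _ _ h => (Sigma.mk.inj_iff.1 (Sum.inl_injective h)).1

def owner : D.Vtx → Fin k
  | .inl ⟨i, _⟩ => i
  | .inr ⟨p, _⟩ => p.1

def entry (i j : Fin k) : D.Vtx :=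
  .inl ⟨j, ⟨D.q i j - 1, by have := D.hq1 i j; have := D.hq2 i j; omega⟩⟩

def ArcOn (S : Finset D.Vtx) (u v : D.Vtx) : Prop :=
  u ∈ S ∧ v ∈ S ∧ D.Arc u v

variable {D} {S : Finset D.Vtx}

lemma acyclicOn_iff_forall_not_transGen : D.AcyclicOn S ↔ ∀ v, ¬ TransGen (D.ArcOn S) v v :=
  ⟨fun h v hv => by
    obtain ⟨hv, -, l, hl, hc⟩ := transGen_restrict_iff.1 hv
    exact h ⟨v, l, hv, hl, hc⟩,
  fun h ⟨v, l, hv, hl, hc⟩ => h v (transGen_restrict_iff.2 ⟨hv, hv, l, hl, hc⟩)⟩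

lemma acyclicOn_of_lt {β : Type*} [Preorder β] (h : D.Vtx → β)
    (H : ∀ u v, D.ArcOn S u v → h u < h v) : D.AcyclicOn S :=
  acyclicOn_iff_forall_not_transGen.2 fun v hv => by
    have hlt := TransGen.lift h H v v hv
    rw [transGen_eq_self] at hlt
    exact lt_irrefl _ hlt

section Cycle

variable {i j : Fin k}

lemma reflTransGen_terminal (hS : ∀ v, D.owner v = i → v ∈ S) (a : Fin (D.n1 i)) :
    ReflTransGen (D.ArcOn S) (.inl ⟨i, a⟩) (D.terminal i) :=
  Fin.reflTransGen_of_succ (f := fun a : Fin (D.n1 i) => (.inl ⟨i, a⟩ : D.Vtx))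
    (fun _ _ hab => ⟨hS _ rfl, hS _ rfl, .inl ⟨rfl, hab⟩⟩) (Fin.mk_le_mk.2 (by omega))

lemma transGen_terminal_entry (hij : i ≠ j) (hSi : ∀ v, D.owner v = i → v ∈ S)
    (hSj : ∀ v, D.owner v = j → v ∈ S) :
    TransGen (D.ArcOn S) (D.terminal i) (D.entry i j) := by
  by_cases h0 : D.n2 i j = 0
  · exact .single ⟨hSi _ rfl, hSj _ rfl, .inr ⟨hij, rfl, h0, rfl⟩⟩
  have hpos : 0 < D.n2 i j := Nat.pos_of_ne_zero h0
  have along : ReflTransGen (D.ArcOn S) (.inr ⟨(i, j), ⟨0, hpos⟩⟩)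
      (.inr ⟨(i, j), ⟨D.n2 i j - 1, by dsimp only; omega⟩⟩) :=
    Fin.reflTransGen_of_succ (f := fun b : Fin (D.n2 i j) => (.inr ⟨(i, j), b⟩ : D.Vtx))
      (fun _ _ hab => ⟨hSi _ rfl, hSi _ rfl, rfl, hab⟩) (Fin.mk_le_mk.2 (Nat.zero_le _))
  have exit : TransGen (D.ArcOn S) (.inr ⟨(i, j), ⟨0, hpos⟩⟩) (D.entry i j) :=
    TransGen.tail' along ⟨hSi _ rfl, hSj _ rfl, rfl, rfl, rfl⟩
  have enter : D.ArcOn S (D.terminal i) (.inr ⟨(i, j), ⟨0, hpos⟩⟩) :=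
    ⟨hSi _ rfl, hSi _ rfl, rfl, rfl, rfl⟩
  exact exit.head enter

lemma transGen_terminal_self (hij : i ≠ j) (hSi : ∀ v, D.owner v = i → v ∈ S)
    (hSj : ∀ v, D.owner v = j → v ∈ S) :
    TransGen (D.ArcOn S) (D.terminal i) (D.terminal i) :=
  ((transGen_terminal_entry hij hSi hSj).trans_left (reflTransGen_terminal hSj _)).trans
    ((transGen_terminal_entry hij.symm hSj hSi).trans_left (reflTransGen_terminal hSi _))

end Cycle

lemma le_card_compl_of_acyclicOn (hS : D.AcyclicOn S) : k - 1 ≤ Sᶜ.card := by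
  by_contra! hlt
  have htwo : 1 < (Sᶜ.image D.owner)ᶜ.card := by
    have := card_image_le (s := Sᶜ) (f := D.owner)
    rw [card_compl, Fintype.card_fin]
    omega
  obtain ⟨i, hi, j, hj, hij⟩ := one_lt_card.1 htwo
  have owned_mem : ∀ m ∉ Sᶜ.image D.owner, ∀ v, D.owner v = m → v ∈ S := by
    rintro _ hm v rfl
    by_contra hv
    exact hm (mem_image_of_mem _ (mem_compl.2 hv))
  exact acyclicOn_iff_forall_not_transGen.1 hS _
    (transGen_terminal_self hij (owned_mem i (mem_compl.1 hi)) (owned_mem j (mem_compl.1 hj)))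

variable (D)

lemma mais_le : D.mais ≤ Fintype.card D.Vtx - k + 1 := by
  classical
  refine Finset.sup_le fun S hS => ?_
  have hcompl := le_card_compl_of_acyclicOn (mem_filter.1 hS).2
  rw [card_compl] at hcompl
  have := card_le_univ S
  omega

def height (i₀ : Fin k) : D.Vtx → ℕ ×ₗ ℕ
  | .inl ⟨i, a⟩ => toLex (if i = i₀ then 1 else 3, a)
  | .inr ⟨p, b⟩ => toLex (if p.1 = i₀ then 2 else 0, b)

lemma acyclicOn_compl_terminals (i₀ : Fin k) :
    D.AcyclicOn ((univ.erase i₀).image D.terminal)ᶜ := by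
  have only_last : ∀ i (a : Fin (D.n1 i)),
      (.inl ⟨i, a⟩ : D.Vtx) ∈ ((univ.erase i₀).image D.terminal)ᶜ → (a : ℕ) = D.n1 i - 1 → i = i₀ := by
    intro i a hmem ha
    by_contra hne
    refine mem_compl.1 hmem (mem_image.2 ⟨i, mem_erase.2 ⟨hne, mem_univ _⟩, ?_⟩)
    simp [terminal, Fin.ext_iff, ha]
  refine acyclicOn_of_lt (D.height i₀) ?_
  rintro (⟨i, a⟩ | ⟨⟨i, j⟩, b⟩) (⟨i', a'⟩ | ⟨⟨i', j'⟩, b'⟩) ⟨hu, -, harc⟩ <;>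
    simp only [height, Prod.Lex.toLex_lt_toLex]
  · rcases harc with ⟨rfl, ha⟩ | ⟨hne, ha, -, -⟩
    · split_ifs <;> omega
    · obtain rfl := only_last i a hu ha
      simp [Ne.symm hne]
  · obtain ⟨rfl, ha, -⟩ := harc
    simp [only_last i a hu ha]
  · obtain ⟨rfl, -, -⟩ := harc
    have hj : i = i₀ → j ≠ i₀ := by
      rintro rfl rfl
      exact absurd b.isLt (by simp [D.hdiag])
    split_ifs with hi hj' <;> first | omega | exact absurd hj' (hj hi)
  · obtain ⟨⟨⟩, hb⟩ := harc
    split_ifs <;> omega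

lemma le_mais (i₀ : Fin k) : Fintype.card D.Vtx - k + 1 ≤ D.mais := by
  classical
  have hk := Fintype.card_le_of_injective _ D.terminal_injective
  rw [Fintype.card_fin] at hk
  have := i₀.pos
  have hcard : ((univ.erase i₀).image D.terminal)ᶜ.card = Fintype.card D.Vtx - k + 1 := by
    rw [card_compl, card_image_of_injective _ D.terminal_injective,
      card_erase_of_mem (mem_univ _), card_univ, Fintype.card_fin]
    omega
  exact hcard ▸ le_sup (mem_filter.2 ⟨mem_univ _, D.acyclicOn_compl_terminals i₀⟩)

end ICCDigraph

/-- For an ICC digraph with `k` Type-I paths and `n` vertices,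
`MAIS(D) = n - k + 1`. -/
theorem stmt8 {k : ℕ} (hk : 1 ≤ k) (D : ICCDigraph k) :
    D.mais = Fintype.card D.Vtx - k + 1 := by
  exact le_antisymm D.mais_le (D.le_mais ⟨0, hk⟩)
end

section
/- For a (GF(2))^t-valued family of messages on an ICC digraph, every vertex can decode its own message from the ICC code together with its side information; i.e., the ICC code is a valid index code for the ICC digraph. -/
/-!
A decoder for `v` exists as soon as `x v` is determined by the codewords and the side
information of `v`: if two message families `x`, `y` have the same ICC code and agree on the
out-neighbours of `v`, then `x v = y v`. Equal codewords `x_a + x_{a+1} = y_a + y_{a+1}` along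
a path propagate agreement from one vertex to the next, in either direction. This settles every
vertex directly, except the terminal vertex `v_{n_i}^i` of a Type-I path. For that vertex,
agreement at its out-neighbour on `P_{i,j}` (or on `P_j`) propagates along `P_{i,j}`, across the
connecting codeword and along `P_j` to `v_{n_j}^j`, for every `j ≠ i`, and the codeword
`∑ⱼ x_{n_j}^j` then forces agreement at `v_{n_i}^i`.
-/

lemma eq_of_eq_of_forall_add_eq_add {M : Type*} [AddCancelCommMonoid M] {f g : ℕ → M}
    {s e : ℕ} (hse : s ≤ e)
    (hstep : ∀ a, s ≤ a → a < e → f a + f (a + 1) = g a + g (a + 1)) (hs : f s = g s) :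
    f e = g e := by
  induction e, hse using Nat.le_induction with
  | base => exact hs
  | succ e hse ih =>
    have he : f e = g e := ih fun a has hae => hstep a has (by omega)
    exact add_left_cancel (he ▸ hstep e hse (by omega))

namespace ICCDigraph

variable {k t : ℕ} {D : ICCDigraph k} {x y : D.Vtx → Fin t → ZMod 2}

lemma msgI_succ (x : D.Vtx → Fin t → ZMod 2) (i : Fin k) (a : Fin (D.n1 i)) :
    D.msgI x i ((a : ℕ) + 1) = x (Sum.inl ⟨i, a⟩) := by
  simp [msgI, a.2]

lemma msgII_succ (x : D.Vtx → Fin t → ZMod 2) (i j : Fin k) (b : Fin (D.n2 i j)) :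
    D.msgII x i j ((b : ℕ) + 1) = x (Sum.inr ⟨(i, j), b⟩) := by
  simp [msgII, b.2]

lemma msgI_add_msgI_succ_of_code_eq (hxy : D.code x = D.code y) (j : Fin k) {a : ℕ}
    (ha : 1 ≤ a) (ha' : a < D.n1 j) :
    D.msgI x j a + D.msgI x j (a + 1) = D.msgI y j a + D.msgI y j (a + 1) := by
  obtain ⟨a, rfl⟩ := Nat.exists_eq_add_of_le' ha
  exact congrFun hxy (Sum.inl ⟨j, ⟨a, by omega⟩⟩)

lemma msgII_add_msgII_succ_of_code_eq (hxy : D.code x = D.code y) (i j : Fin k) {b : ℕ}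
    (hb : 1 ≤ b) (hb' : b < D.n2 i j) :
    D.msgII x i j b + D.msgII x i j (b + 1) = D.msgII y i j b + D.msgII y i j (b + 1) := by
  obtain ⟨b, rfl⟩ := Nat.exists_eq_add_of_le' hb
  exact congrFun hxy (Sum.inr (Sum.inl ⟨(i, j), ⟨b, show b < D.n2 i j - 1 by omega⟩⟩))

lemma msgII_add_msgI_of_code_eq (hxy : D.code x = D.code y) {i j : Fin k}
    (hn : 1 ≤ D.n2 i j) :
    D.msgII x i j (D.n2 i j) + D.msgI x j (D.q i j) =
      D.msgII y i j (D.n2 i j) + D.msgI y j (D.q i j) :=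
  congrFun hxy (Sum.inr (Sum.inr (Sum.inl ⟨(i, j), hn⟩)))

lemma sum_msgI_of_code_eq (hxy : D.code x = D.code y) :
    ∑ i, D.msgI x i (D.n1 i) = ∑ i, D.msgI y i (D.n1 i) :=
  congrFun hxy (Sum.inr (Sum.inr (Sum.inr ())))

lemma msgI_last_eq_of_msgI_q_eq (hxy : D.code x = D.code y) (i j : Fin k)
    (hq : D.msgI x j (D.q i j) = D.msgI y j (D.q i j)) :
    D.msgI x j (D.n1 j) = D.msgI y j (D.n1 j) :=
  eq_of_eq_of_forall_add_eq_add (D.hq2 i j)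
    (fun _ ha ha' => msgI_add_msgI_succ_of_code_eq hxy j (D.hq1 i j |>.trans ha) ha') hq

lemma msgII_last_eq_of_msgII_one_eq (hxy : D.code x = D.code y) (i j : Fin k)
    (hn : 1 ≤ D.n2 i j) (h1 : D.msgII x i j 1 = D.msgII y i j 1) :
    D.msgII x i j (D.n2 i j) = D.msgII y i j (D.n2 i j) :=
  eq_of_eq_of_forall_add_eq_add hn
    (fun _ hb hb' => msgII_add_msgII_succ_of_code_eq hxy i j hb hb') h1

lemma msgI_q (x : D.Vtx → Fin t → ZMod 2) (i j : Fin k) :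
    D.msgI x j (D.q i j) =
      x (Sum.inl ⟨j, ⟨D.q i j - 1, by have := D.hq1 i j; have := D.hq2 i j; omega⟩⟩) := by
  simp [msgI, D.hq1 i j, D.hq2 i j]

lemma msgI_last_eq_of_eqOn_arc_of_ne (hxy : D.code x = D.code y) {i : Fin k} {a : Fin (D.n1 i)}
    (ha : (a : ℕ) + 1 = D.n1 i) (hside : ∀ u, D.Arc (Sum.inl ⟨i, a⟩) u → x u = y u)
    {j : Fin k} (hji : j ≠ i) :
    D.msgI x j (D.n1 j) = D.msgI y j (D.n1 j) := by
  refine msgI_last_eq_of_msgI_q_eq hxy i j ?_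
  by_cases hn : D.n2 i j = 0
  · rw [msgI_q, msgI_q]
    exact hside _ (Or.inr ⟨hji.symm, by omega, hn, rfl⟩)
  · have hn : 1 ≤ D.n2 i j := Nat.one_le_iff_ne_zero.mpr hn
    have hfirst := hside (Sum.inr ⟨(i, j), ⟨0, hn⟩⟩) ⟨rfl, by omega, rfl⟩
    have h1 : D.msgII x i j 1 = D.msgII y i j 1 :=
      (msgII_succ x i j ⟨0, hn⟩).trans <| hfirst.trans (msgII_succ y i j ⟨0, hn⟩).symm
    have hlast := msgII_last_eq_of_msgII_one_eq hxy i j hn h1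
    exact add_left_cancel (hlast ▸ msgII_add_msgI_of_code_eq hxy hn)

lemma eq_of_code_eq_of_eqOn_arc (hxy : D.code x = D.code y) :
    ∀ v : D.Vtx, (∀ u, D.Arc v u → x u = y u) → x v = y v
  | Sum.inl ⟨i, a⟩, hside => by
    rw [← msgI_succ x, ← msgI_succ y]
    by_cases ha : (a : ℕ) + 1 < D.n1 i
    · have hnext := hside (Sum.inl ⟨i, ⟨a + 1, ha⟩⟩) (Or.inl ⟨rfl, rfl⟩)
      rw [← msgI_succ x, ← msgI_succ y] at hnext
      exact add_right_cancel (hnext ▸ msgI_add_msgI_succ_of_code_eq hxy i (by omega) ha)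
    · have ha : (a : ℕ) + 1 = D.n1 i := by omega
      have hsum := sum_msgI_of_code_eq hxy
      rw [← Finset.add_sum_erase _ _ (Finset.mem_univ i),
        ← Finset.add_sum_erase _ _ (Finset.mem_univ i), Finset.sum_congr rfl fun j hj =>
          msgI_last_eq_of_eqOn_arc_of_ne hxy ha hside (Finset.ne_of_mem_erase hj)] at hsum
      rw [ha]
      exact add_right_cancel hsum
  | Sum.inr ⟨(i, j), b⟩, hside => by
    have hb' : (b : ℕ) < D.n2 i j := b.2
    rw [← msgII_succ x, ← msgII_succ y]
    by_cases hb : (b : ℕ) + 1 < D.n2 i j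
    · have hnext := hside (Sum.inr ⟨(i, j), ⟨b + 1, hb⟩⟩) ⟨rfl, rfl⟩
      rw [← msgII_succ x, ← msgII_succ y] at hnext
      exact add_right_cancel (hnext ▸ msgII_add_msgII_succ_of_code_eq hxy i j (by omega) hb)
    · have hb : (b : ℕ) + 1 = D.n2 i j := by omega
      have hqj : D.q i j - 1 < D.n1 j := by have := D.hq1 i j; have := D.hq2 i j; omega
      have hq := hside (Sum.inl ⟨j, ⟨D.q i j - 1, hqj⟩⟩)
        ⟨rfl, by dsimp only; omega, rfl⟩
      rw [← msgI_q x i j, ← msgI_q y i j] at hq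
      rw [hb]
      exact add_right_cancel (hq ▸ msgII_add_msgI_of_code_eq hxy (by omega))

end ICCDigraph

/-- The ICC code is a valid index code for the ICC digraph: every
vertex `v` can decode its own message from the ICC codewords together with its
side information (the messages of its out-neighbors). -/
theorem stmt11 {k t : ℕ} (D : ICCDigraph k) (v : D.Vtx) :
    ∃ g : (D.CodeIdx → Fin t → ZMod 2) →
        ({u : D.Vtx // D.Arc v u} → Fin t → ZMod 2) → (Fin t → ZMod 2),
      ∀ x : D.Vtx → Fin t → ZMod 2, g (D.code x) (fun u => x u.1) = x v := by
  have hfactor : Function.FactorsThrough (fun x : D.Vtx → Fin t → ZMod 2 => x v)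
      (fun x => (D.code x, fun u : {u // D.Arc v u} => x u.1)) := by
    intro x y hxy
    obtain ⟨hcode, hside⟩ := Prod.ext_iff.mp hxy
    exact ICCDigraph.eq_of_code_eq_of_eqOn_arc hcode v fun u hu => congrFun hside ⟨u, hu⟩
  obtain ⟨g, hg⟩ := (Function.factorsThrough_iff _).mp hfactor
  exact ⟨fun c s => g (c, s), fun x => (congrFun hg x).symm⟩
end

section
/- In an ICC digraph, the terminal vertex v_{n_i}^i of Type-I path P_i can decode its message x_{n_i}^i from the ICC code: specifically, x_{n_i}^i equals the XOR of the codeword w' = ⊕_{h=1}^k x_{n_h}^h, the sums ⊕_{a=q_i}^{n_h−1} w_a^h over all h ≠ i with n_{ih} = 0, the values x_1^{ih} ⊕ x_{n_h}^h over all h ≠ i with n_{ih} ≥ 1, and the side-information messages x_{q_i}^h (for h with n_{ih}=0) and x_1^{ih} (for h with n_{ih} ≥ 1), all of which v_{n_i}^i knows or can derive. -/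
namespace ZModModule

variable {G : Type*} [AddCommGroup G] [Module (ZMod 2) G]

theorem sum_Ico_add_succ (g : ℕ → G) {m n : ℕ} (hmn : m ≤ n) :
    ∑ a ∈ Finset.Ico m n, (g a + g (a + 1)) = g m + g n := by
  simpa only [sub_eq_add, add_comm] using Finset.sum_Ico_sub g hmn

theorem sum_add_sum_erase {ι : Type*} [DecidableEq ι] {s : Finset ι} (f : ι → G) {i : ι}
    (hi : i ∈ s) : ∑ j ∈ s, f j + ∑ j ∈ s.erase i, f j = f i := by
  rw [← Finset.add_sum_erase s f hi, add_assoc, add_self, add_zero]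

end ZModModule

theorem Finset.sum_filter_and_add_sum_filter_and_not {ι M : Type*} [AddCommMonoid M]
    (s : Finset ι) (q p : ι → Prop) [DecidablePred q] [DecidablePred p] (f : ι → M) :
    ∑ j ∈ s with q j ∧ p j, f j + ∑ j ∈ s with q j ∧ ¬ p j, f j = ∑ j ∈ s with q j, f j := by
  rw [← filter_filter, ← filter_filter, sum_filter_add_sum_filter_not]

namespace ICCDigraph

variable {k t : ℕ} (D : ICCDigraph k)

theorem sum_Ico_codeword_add_msgI (x : D.Vtx → Fin t → ZMod 2) (i h : Fin k) :
    ∑ a ∈ Finset.Ico (D.q i h) (D.n1 h), (D.msgI x h a + D.msgI x h (a + 1)) +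
      D.msgI x h (D.q i h) = D.msgI x h (D.n1 h) := by
  rw [ZModModule.sum_Ico_add_succ _ (D.hq2 i h), add_comm, ← add_assoc,
    ZModModule.add_self, zero_add]

end ICCDigraph

open Finset in
/-- The terminal vertex `v_{n_i}^i` decodes its message: `x_{n_i}^i`
equals the XOR of `w' = ⊕_h x_{n_h}^h`, the sums `⊕_{a=q_i}^{n_h-1} w_a^h` over
`h ≠ i` with `n_{ih} = 0`, the values `x_1^{ih} ⊕ x_{n_h}^h` over `h ≠ i` with
`n_{ih} ≥ 1`, and the side information `x_{q_i}^h` (for `n_{ih} = 0`) and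
`x_1^{ih}` (for `n_{ih} ≥ 1`). -/
theorem stmt12 {k t : ℕ} (D : ICCDigraph k) (i : Fin k)
    (x : D.Vtx → Fin t → ZMod 2) :
    D.msgI x i (D.n1 i) =
      (∑ h : Fin k, D.msgI x h (D.n1 h)) +
      (∑ h ∈ univ.filter fun h => h ≠ i ∧ D.n2 i h = 0,
        ∑ a ∈ Finset.Ico (D.q i h) (D.n1 h),
          (D.msgI x h a + D.msgI x h (a + 1))) +
      (∑ h ∈ univ.filter fun h => h ≠ i ∧ 1 ≤ D.n2 i h,
        (D.msgII x i h 1 + D.msgI x h (D.n1 h))) +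
      (∑ h ∈ univ.filter fun h => h ≠ i ∧ D.n2 i h = 0,
        D.msgI x h (D.q i h)) +
      (∑ h ∈ univ.filter fun h => h ≠ i ∧ 1 ≤ D.n2 i h,
        D.msgII x i h 1) := by
  set f : Fin k → Fin t → ZMod 2 := fun h => D.msgI x h (D.n1 h)
  have h_empty : ∑ h ∈ univ.filter (fun h => h ≠ i ∧ D.n2 i h = 0),
      ∑ a ∈ Ico (D.q i h) (D.n1 h), (D.msgI x h a + D.msgI x h (a + 1)) +
      ∑ h ∈ univ.filter (fun h => h ≠ i ∧ D.n2 i h = 0), D.msgI x h (D.q i h) =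
        ∑ h ∈ univ.filter (fun h => h ≠ i ∧ D.n2 i h = 0), f h := by
    rw [← sum_add_distrib]
    exact sum_congr rfl fun h _ => D.sum_Ico_codeword_add_msgI x i h
  have h_nonempty : ∑ h ∈ univ.filter (fun h => h ≠ i ∧ 1 ≤ D.n2 i h),
      (D.msgII x i h 1 + f h) + ∑ h ∈ univ.filter (fun h => h ≠ i ∧ 1 ≤ D.n2 i h),
        D.msgII x i h 1 = ∑ h ∈ univ.filter (fun h => h ≠ i ∧ ¬ D.n2 i h = 0), f h := by
    rw [← sum_add_distrib]
    refine sum_congr (filter_congr fun h _ => by rw [Nat.one_le_iff_ne_zero]) fun h _ => ?_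
    rw [add_comm, ← add_assoc, ZModModule.add_self, zero_add]
  have regroup : ∀ a b c d e : Fin t → ZMod 2, a + b + c + d + e = a + (b + d + (c + e)) := by
    intros; abel
  rw [regroup, h_empty, h_nonempty, sum_filter_and_add_sum_filter_and_not, filter_ne',
    ZModModule.sum_add_sum_erase f (mem_univ i)]
end

section
/- For the 6-vertex digraph D_1 in which there are no arcs among v_1,v_2,v_3, but v_1 knows x_5,x_6; v_2 knows x_4,x_6; v_3 knows x_4,x_5; and v_4 knows x_1, v_5 knows x_2, v_6 knows x_3, the code {x_4 ⊕ x_1, x_5 ⊕ x_2, x_6 ⊕ x_3, x_1 ⊕ x_2 ⊕ x_3} is a valid index code of length 4, and 4 equals MAIS(D_1), hence this code is optimal: ℓ*_t(D_1) = 4 for all t ≥ 1. -/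
/-- The arc relation of the 6-vertex digraph `D₁` (0-based vertices: `v_{i+1} = i`):
arcs `v_1→v_5, v_1→v_6, v_2→v_4, v_2→v_6, v_3→v_4, v_3→v_5, v_4→v_1, v_5→v_2,
v_6→v_3`. A vertex's side information is the messages of its out-neighbors. -/
def ArcD1 : Fin 6 → Fin 6 → Prop := fun u v =>
  (u, v) ∈ ([(0, 4), (0, 5), (1, 3), (1, 5), (2, 3), (2, 4),
             (3, 0), (4, 1), (5, 2)] : List (Fin 6 × Fin 6))

/-- `S` induces an acyclic subdigraph of `D₁`. -/
def AcyclicOnD1 (S : Finset (Fin 6)) : Prop :=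
  ¬ ∃ (v : Fin 6) (l : List (Fin 6)),
      v ∈ S ∧ (∀ u ∈ l, u ∈ S) ∧ List.Chain ArcD1 v (l ++ [v])

instance : DecidableRel ArcD1 := fun u v =>
  inferInstanceAs (Decidable ((u, v) ∈ ([(0, 4), (0, 5), (1, 3), (1, 5), (2, 3), (2, 4),
             (3, 0), (4, 1), (5, 2)] : List (Fin 6 × Fin 6))))

lemma chain_transGen {α} {R : α → α → Prop} {P : α → Prop} :
    ∀ (l : List α) (v w : α), List.Chain R v (l ++ [w]) → P v → (∀ u ∈ l, P u) → P w →
      Relation.TransGen (fun a b => R a b ∧ P a ∧ P b) v w := by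
  intro l
  induction l with
  | nil =>
    intro v w h hv _ hw
    simp only [List.nil_append, List.chain_cons] at h
    exact Relation.TransGen.single ⟨List.rel_of_isChain_cons_cons h, hv, hw⟩
  | cons a l ih =>
    intro v w h hv hl hw
    rw [List.cons_append] at h; replace h := List.isChain_cons_cons.mp h
    exact Relation.TransGen.head ⟨h.1, hv, hl a (List.mem_cons_self (a := a) (l := l))⟩
      (ih a w h.2 (hl a (List.mem_cons_self (a := a) (l := l))) (fun u hu => hl u (List.mem_cons_of_mem a hu)) hw)

lemma acyclic_0123 : AcyclicOnD1 ({0, 1, 2, 3} : Finset (Fin 6)) := by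
  rintro ⟨v, l, hv, hl, hc⟩
  set S : Finset (Fin 6) := {0, 1, 2, 3}
  have htg := chain_transGen (P := fun u => u ∈ S) l v v hc hv hl hv
  set f : Fin 6 → ℕ := ![2, 0, 0, 1, 0, 0]
  have key : ∀ a b : Fin 6, (ArcD1 a b ∧ a ∈ S ∧ b ∈ S) → f a < f b := by decide
  have htg2 : Relation.TransGen (fun a b : Fin 6 => f a < f b) v v :=
    Relation.TransGen.mono (fun a b h => key a b h) _ _ htg
  have he := (haveI : IsTrans (Fin 6) (fun a b : Fin 6 => f a < f b) := ⟨fun _ _ _ hab hbc => lt_trans hab hbc⟩; Relation.transGen_eq_self (r := fun a b : Fin 6 => f a < f b))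
  rw [he] at htg2
  exact absurd htg2 (lt_irrefl _)

/-- For the digraph `D₁`, the code
`{x_4 ⊕ x_1, x_5 ⊕ x_2, x_6 ⊕ x_3, x_1 ⊕ x_2 ⊕ x_3}` is a valid index code of
length `4`, and `4 = MAIS(D₁)`, hence this code is optimal: `ℓ*_t(D₁) = 4`
(i.e., every valid index code uses at least `4t` bits) for all `t ≥ 1`. -/
theorem stmt19 (t : ℕ) (ht : 1 ≤ t) :
    (∀ v : Fin 6,
      ∃ g : (Fin 4 → Fin t → ZMod 2) →
          ({u : Fin 6 // ArcD1 v u} → Fin t → ZMod 2) → (Fin t → ZMod 2),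
        ∀ x : Fin 6 → Fin t → ZMod 2,
          g ![x 3 + x 0, x 4 + x 1, x 5 + x 2, x 0 + x 1 + x 2]
            (fun u => x u.1) = x v) ∧
    (∃ S : Finset (Fin 6), AcyclicOnD1 S ∧ S.card = 4) ∧
    (∀ S : Finset (Fin 6), AcyclicOnD1 S → S.card ≤ 4) ∧
    (∀ (p : ℕ) (E : (Fin 6 → Fin t → ZMod 2) → Fin p → ZMod 2),
      (∀ v : Fin 6,
        ∃ g : (Fin p → ZMod 2) →
            ({u : Fin 6 // ArcD1 v u} → Fin t → ZMod 2) → (Fin t → ZMod 2),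
          ∀ x, g (E x) (fun u => x u.1) = x v) →
      4 * t ≤ p) := by
  refine ⟨?_, ⟨({0, 1, 2, 3} : Finset (Fin 6)), acyclic_0123, by decide⟩, ?_, ?_⟩
  · have h2 : (2 : ZMod 2) = 0 := rfl
    intro v
    fin_cases v
    · refine ⟨fun y s => y 3 + (y 1 + s ⟨4, by decide⟩) + (y 2 + s ⟨5, by decide⟩), fun x => ?_⟩
      simp only [Matrix.cons_val_zero, Matrix.cons_val_one, Matrix.head_cons, Fin.isValue,
        Matrix.cons_val_two, Matrix.tail_cons, Matrix.cons_val_three]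
      show _ = x 0
      funext i
      simp only [Pi.add_apply]
      linear_combination (x 1 i + x 2 i + x 4 i + x 5 i) * h2
    · refine ⟨fun y s => y 3 + (y 0 + s ⟨3, by decide⟩) + (y 2 + s ⟨5, by decide⟩), fun x => ?_⟩
      simp only [Matrix.cons_val_zero, Matrix.cons_val_one, Matrix.head_cons, Fin.isValue,
        Matrix.cons_val_two, Matrix.tail_cons, Matrix.cons_val_three]
      show _ = x 1
      funext i
      simp only [Pi.add_apply]
      linear_combination (x 0 i + x 2 i + x 3 i + x 5 i) * h2
    · refine ⟨fun y s => y 3 + (y 0 + s ⟨3, by decide⟩) + (y 1 + s ⟨4, by decide⟩), fun x => ?_⟩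
      simp only [Matrix.cons_val_zero, Matrix.cons_val_one, Matrix.head_cons, Fin.isValue,
        Matrix.cons_val_two, Matrix.tail_cons, Matrix.cons_val_three]
      show _ = x 2
      funext i
      simp only [Pi.add_apply]
      linear_combination (x 0 i + x 1 i + x 3 i + x 4 i) * h2
    · refine ⟨fun y s => y 0 + s ⟨0, by decide⟩, fun x => ?_⟩
      simp only [Matrix.cons_val_zero]
      show _ = x 3
      funext i
      simp only [Pi.add_apply]
      linear_combination (x 0 i) * h2
    · refine ⟨fun y s => y 1 + s ⟨1, by decide⟩, fun x => ?_⟩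
      simp only [Matrix.cons_val_one, Matrix.head_cons, Matrix.cons_val_zero]
      show _ = x 4
      funext i
      simp only [Pi.add_apply]
      linear_combination (x 1 i) * h2
    · refine ⟨fun y s => y 2 + s ⟨2, by decide⟩, fun x => ?_⟩
      simp only [Matrix.cons_val_two, Matrix.tail_cons, Matrix.head_cons]
      show _ = x 5
      funext i
      simp only [Pi.add_apply]
      linear_combination (x 2 i) * h2
  · intro S hS
    by_contra h
    push_neg at h
    have h5 : 5 ≤ S.card := h
    have hmem : ∀ u w : Fin 6, u ≠ w → u ∉ S → w ∈ S := by
      intro u w huw hu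
      by_contra hw
      have hsub : ({u, w} : Finset (Fin 6)) ⊆ Sᶜ := by
        intro x hx
        simp only [Finset.mem_insert, Finset.mem_singleton] at hx
        rcases hx with rfl | rfl <;> simpa [Finset.mem_compl]
      have h1 : ({u, w} : Finset (Fin 6)).card = 2 := Finset.card_pair huw
      have h2 := Finset.card_le_card hsub
      have h3 : Sᶜ.card = 6 - S.card := by
        rw [Finset.card_compl]; rfl
      omega
    apply hS
    by_cases h0 : (0 : Fin 6) ∈ S
    · by_cases h3 : (3 : Fin 6) ∈ S
      · by_cases h1 : (1 : Fin 6) ∈ S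
        · by_cases h4 : (4 : Fin 6) ∈ S
          · exact ⟨0, [4, 1, 3], h0, by intro u hu; fin_cases hu <;> assumption, by simp [List.Chain, List.isChain_cons_cons, ArcD1]⟩
          · refine ⟨0, [5, 2, 3], h0, ?_, by simp [List.Chain, List.isChain_cons_cons, ArcD1]⟩
            intro u hu; fin_cases hu
            · exact hmem 4 5 (by decide) h4
            · exact hmem 4 2 (by decide) h4
            · exact h3
        · refine ⟨0, [5, 2, 3], h0, ?_, by simp [List.Chain, List.isChain_cons_cons, ArcD1]⟩
          intro u hu; fin_cases hu
          · exact hmem 1 5 (by decide) h1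
          · exact hmem 1 2 (by decide) h1
          · exact h3
      · refine ⟨1, [5, 2, 4], hmem 3 1 (by decide) h3, ?_, by simp [List.Chain, List.isChain_cons_cons, ArcD1]⟩
        intro u hu; fin_cases hu
        · exact hmem 3 5 (by decide) h3
        · exact hmem 3 2 (by decide) h3
        · exact hmem 3 4 (by decide) h3
    · refine ⟨1, [5, 2, 4], hmem 0 1 (by decide) h0, ?_, by simp [List.Chain, List.isChain_cons_cons, ArcD1]⟩
      intro u hu; fin_cases hu
      · exact hmem 0 5 (by decide) h0
      · exact hmem 0 2 (by decide) h0
      · exact hmem 0 4 (by decide) h0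
  · intro p E hdec
    set f : (Fin 4 → Fin t → ZMod 2) → (Fin 6 → Fin t → ZMod 2) :=
      fun a => ![a 0, a 1, a 2, a 3, 0, 0] with hf
    have hinj : Function.Injective (fun a => E (f a)) := by
      intro a b hab
      simp only at hab
      obtain ⟨g0, hg0⟩ := hdec 0
      obtain ⟨g1, hg1⟩ := hdec 1
      obtain ⟨g2, hg2⟩ := hdec 2
      obtain ⟨g3, hg3⟩ := hdec 3
      -- step 0 : out-neighbors 4, 5, both zero under f
      have e0 : a 0 = b 0 := by
        have sa := hg0 (f a); have sb := hg0 (f b)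
        have hside : (fun u : {u : Fin 6 // ArcD1 0 u} => f a u.1)
            = (fun u : {u : Fin 6 // ArcD1 0 u} => f b u.1) := by
          funext u
          have hu : u.1 = 4 ∨ u.1 = 5 := by
            have := u.2
            revert this
            have : ∀ w : Fin 6, ArcD1 0 w → w = 4 ∨ w = 5 := by decide
            exact this u.1
          rcases hu with h | h <;> rw [h] <;> rfl
        have : f a 0 = f b 0 := by
          rw [show f a 0 = g0 (E (f a)) (fun u => f a u.1) from (hg0 (f a)).symm,
            show f b 0 = g0 (E (f b)) (fun u => f b u.1) from (hg0 (f b)).symm, hab, hside]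
        simpa [hf] using this
      have e3 : a 3 = b 3 := by
        have hside : (fun u : {u : Fin 6 // ArcD1 3 u} => f a u.1)
            = (fun u : {u : Fin 6 // ArcD1 3 u} => f b u.1) := by
          funext u
          have hu : u.1 = 0 := by
            have := u.2
            revert this
            have : ∀ w : Fin 6, ArcD1 3 w → w = 0 := by decide
            exact this u.1
          rw [hu]; exact e0
        have : f a 3 = f b 3 := by
          rw [show f a 3 = g3 (E (f a)) (fun u => f a u.1) from (hg3 (f a)).symm,
            show f b 3 = g3 (E (f b)) (fun u => f b u.1) from (hg3 (f b)).symm, hab, hside]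
        simpa [hf] using this
      have e1 : a 1 = b 1 := by
        have hside : (fun u : {u : Fin 6 // ArcD1 1 u} => f a u.1)
            = (fun u : {u : Fin 6 // ArcD1 1 u} => f b u.1) := by
          funext u
          have hu : u.1 = 3 ∨ u.1 = 5 := by
            have := u.2
            revert this
            have : ∀ w : Fin 6, ArcD1 1 w → w = 3 ∨ w = 5 := by decide
            exact this u.1
          rcases hu with h | h <;> rw [h] <;> first | rfl | exact e3
        have : f a 1 = f b 1 := by
          rw [show f a 1 = g1 (E (f a)) (fun u => f a u.1) from (hg1 (f a)).symm,
            show f b 1 = g1 (E (f b)) (fun u => f b u.1) from (hg1 (f b)).symm, hab, hside]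
        simpa [hf] using this
      have e2 : a 2 = b 2 := by
        have hside : (fun u : {u : Fin 6 // ArcD1 2 u} => f a u.1)
            = (fun u : {u : Fin 6 // ArcD1 2 u} => f b u.1) := by
          funext u
          have hu : u.1 = 3 ∨ u.1 = 4 := by
            have := u.2
            revert this
            have : ∀ w : Fin 6, ArcD1 2 w → w = 3 ∨ w = 4 := by decide
            exact this u.1
          rcases hu with h | h <;> rw [h] <;> first | rfl | exact e3
        have : f a 2 = f b 2 := by
          rw [show f a 2 = g2 (E (f a)) (fun u => f a u.1) from (hg2 (f a)).symm,
            show f b 2 = g2 (E (f b)) (fun u => f b u.1) from (hg2 (f b)).symm, hab, hside]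
        simpa [hf] using this
      funext i
      fin_cases i
      exacts [e0, e1, e2, e3]
    have hcard := Fintype.card_le_of_injective _ hinj
    have hL : Fintype.card (Fin 4 → Fin t → ZMod 2) = 2 ^ (4 * t) := by
      simp [Fintype.card_fun, ZMod.card]
      rw [← pow_mul, mul_comm]
    have hR : Fintype.card (Fin p → ZMod 2) = 2 ^ p := by
      simp [Fintype.card_fun, ZMod.card]
    rw [hL, hR] at hcard
    exact (Nat.pow_le_pow_iff_right (by norm_num)).mp hcard
end
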